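/- For real numbers β1, β2, ε, v with 0 < β1 ≤ β2 ≤ 2β1, ε ≥ 0, v ≥ 0, and every t > 0, one has β1·e^{−β1 t}·(ε + √(v/(1 − e^{−β2 t}))) ≥ (β2/2)·e^{−β2 t}·((1 − e^{−β1 t})/(1 − e^{−β2 t}))·√(v/(1 − e^{−β2 t})). -/

import Mathlib

/-!
Clearing the denominators `1 - e^{-β t}`, the coefficient comparison becomes
`(β2/2) (e^{β1 t} - 1) ≤ β1 (e^{β2 t} - 1)`, which follows from `β2/2 ≤ β1` and
`e^{β1 t} ≤ e^{β2 t}`. The common factor `√(v/(1 - e^{-β2 t}))` and the extra `ε` only help.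
-/

open Real

lemma exp_neg_mul_one_sub_exp_neg (a b : ℝ) :
    exp (-b) * (1 - exp (-a)) = exp (-(a + b)) * (exp a - 1) := by
  rw [mul_sub, mul_sub, ← exp_add, ← exp_add]
  ring_nf

lemma half_mul_exp_sub_one_le {β1 β2 t : ℝ} (hβ1 : 0 ≤ β1) (hβ12 : β1 ≤ β2)
    (hβ2 : β2 ≤ 2 * β1) (ht : 0 ≤ t) :
    β2 / 2 * (exp (β1 * t) - 1) ≤ β1 * (exp (β2 * t) - 1) := by
  have hexp : 0 ≤ exp (β1 * t) - 1 := by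
    linarith [one_le_exp (mul_nonneg hβ1 ht)]
  calc β2 / 2 * (exp (β1 * t) - 1) ≤ β1 * (exp (β1 * t) - 1) := by gcongr; linarith
    _ ≤ β1 * (exp (β2 * t) - 1) := by gcongr

lemma half_mul_exp_neg_mul_div_le {β1 β2 t : ℝ} (hβ1 : 0 < β1) (hβ12 : β1 ≤ β2)
    (hβ2 : β2 ≤ 2 * β1) (ht : 0 < t) :
    β2 / 2 * exp (-(β2 * t)) * ((1 - exp (-(β1 * t))) / (1 - exp (-(β2 * t)))) ≤
      β1 * exp (-(β1 * t)) := by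
  have hden : 0 < 1 - exp (-(β2 * t)) := by
    rw [sub_pos, exp_lt_one_iff, neg_lt_zero]
    exact mul_pos (hβ1.trans_le hβ12) ht
  -- after clearing the denominator both sides carry the factor `e^{-(β1 t + β2 t)}`
  rw [← mul_div_assoc, div_le_iff₀ hden, mul_assoc, exp_neg_mul_one_sub_exp_neg,
    mul_assoc, exp_neg_mul_one_sub_exp_neg, add_comm (β2 * t), mul_left_comm,
    mul_left_comm β1]
  exact mul_le_mul_of_nonneg_left (half_mul_exp_sub_one_le hβ1.le hβ12 hβ2 ht.le)
    (exp_pos _).le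

theorem adam_preconditioner_derivative_nonneg_general (β1 β2 ε v t : ℝ)
    (hβ1 : 0 < β1) (hβ12 : β1 ≤ β2) (hβ2 : β2 ≤ 2 * β1)
    (hε : 0 ≤ ε) (ht : 0 < t) :
    β2 / 2 * Real.exp (-(β2 * t)) *
        ((1 - Real.exp (-(β1 * t))) / (1 - Real.exp (-(β2 * t)))) *
        Real.sqrt (v / (1 - Real.exp (-(β2 * t)))) ≤
      β1 * Real.exp (-(β1 * t)) *
        (ε + Real.sqrt (v / (1 - Real.exp (-(β2 * t))))) := by
  calc _ ≤ β1 * exp (-(β1 * t)) * √(v / (1 - exp (-(β2 * t)))) :=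
        mul_le_mul_of_nonneg_right (half_mul_exp_neg_mul_div_le hβ1 hβ12 hβ2 ht)
          (sqrt_nonneg _)
    _ ≤ _ := by gcongr; exact le_add_of_nonneg_left hε

/-- Nonnegativity of the time derivative of the Adam bias-corrected preconditioner
(yielding `P₂ ≤ 0` in the proof of Theorem 4): for `0 < β1 ≤ β2 ≤ 2 β1`, `ε ≥ 0`,
`v ≥ 0` and `t > 0`,
`β1 e^{-β1 t} (ε + √(v/(1-e^{-β2 t}))) ≥ (β2/2) e^{-β2 t} ((1-e^{-β1 t})/(1-e^{-β2 t})) √(v/(1-e^{-β2 t}))`. -/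
theorem adam_preconditioner_derivative_nonneg (β1 β2 ε v t : ℝ)
    (hβ1 : 0 < β1) (hβ12 : β1 ≤ β2) (hβ2 : β2 ≤ 2 * β1)
    (hε : 0 ≤ ε) (hv : 0 ≤ v) (ht : 0 < t) :
    β2 / 2 * Real.exp (-(β2 * t)) *
        ((1 - Real.exp (-(β1 * t))) / (1 - Real.exp (-(β2 * t)))) *
        Real.sqrt (v / (1 - Real.exp (-(β2 * t)))) ≤
      β1 * Real.exp (-(β1 * t)) *
        (ε + Real.sqrt (v / (1 - Real.exp (-(β2 * t))))) :=
  adam_preconditioner_derivative_nonneg_general β1 β2 ε v t hβ1 hβ12 hβ2 hε ht
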